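/- Let J be a finite type with decidable equality and B = Bool. For every a : Matrix (J × B × B) (J × B × B) ℂ there exists a unique b : Matrix (J × B) (J × B) ℂ such that a * Ek = emb(b) * Ek. (Existence and uniqueness of b ∈ End(V^{⊗k}) with a·e_k = (b ⊗ 1)·e_k; in particular the map b ↦ emb(b) * Ek is injective.) -/
import Mathlib


open Matrix

/-- The matrix `ℰ` of the map `e : V ⊗ V → V ⊗ V`, `e(x ⊗ y) = x ⊗ y − y ⊗ x`. -/
noncomputable def Emat : Matrix (Bool × Bool) (Bool × Bool) ℂ :=
  Matrix.of fun p q => (if p = q then 1 else 0) - (if p = (q.2, q.1) then 1 else 0)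

/-- The matrix of `e_k = 1^{⊗(k−1)} ⊗ e` on `V^{⊗(k+1)}`. -/
noncomputable def EkMat (J : Type*) [DecidableEq J] :
    Matrix (J × Bool × Bool) (J × Bool × Bool) ℂ :=
  Matrix.of fun x y => (if x.1 = y.1 then 1 else 0) * Emat x.2 y.2

/-- The embedding `b ↦ b ⊗ 1` of `End(V^{⊗k})` into `End(V^{⊗(k+1)})`. -/
noncomputable def emb {J : Type*} (b : Matrix (J × Bool) (J × Bool) ℂ) :
    Matrix (J × Bool × Bool) (J × Bool × Bool) ℂ :=
  Matrix.of fun x y =>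
    b (x.1, x.2.1) (y.1, y.2.1) * (if x.2.2 = y.2.2 then 1 else 0)

set_option linter.unnecessarySeqFocus false in
lemma mulEk_apply {J : Type*} [Fintype J] [DecidableEq J]
    (M : Matrix (J × Bool × Bool) (J × Bool × Bool) ℂ) (x y) :
    (M * EkMat J) x y = M x y - M x (y.1, y.2.2, y.2.1) := by
  obtain ⟨q, u, v⟩ := y
  rw [Matrix.mul_apply, Fintype.sum_prod_type]
  have h1 : ∀ p : J, ∀ st : Bool × Bool,
      M x (p, st) * EkMat J (p, st) (q, u, v)
      = (if p = q then (M x (p, st) * (if st = (u,v) then 1 else 0)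
          - M x (p, st) * (if st = (v,u) then 1 else 0)) else 0) := by
    intro p st
    simp [EkMat, Emat, Prod.ext_iff]
    split <;> ring_nf <;> simp [mul_sub]
  calc (∑ p : J, ∑ st : Bool × Bool, M x (p, st) * EkMat J (p, st) (q, u, v))
      = ∑ p : J, (if p = q then ∑ st : Bool × Bool, (M x (p, st) * (if st = (u,v) then 1 else 0)
          - M x (p, st) * (if st = (v,u) then 1 else 0)) else 0) := by
        refine Finset.sum_congr rfl fun p _ => ?_
        rw [Finset.sum_congr rfl fun st _ => h1 p st]
        split <;> simp
    _ = M x (q, u, v) - M x (q, v, u) := by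
        rw [Finset.sum_ite_eq' Finset.univ q]
        simp only [Finset.mem_univ, if_true, Fintype.sum_prod_type, Fintype.sum_bool]
        cases u <;> cases v <;> simp [Prod.ext_iff] <;> ring

lemma embEk_recover {J : Type*} [Fintype J] [DecidableEq J]
    (b : Matrix (J × Bool) (J × Bool) ℂ) (p : J) (s : Bool) (q : J) (u : Bool) :
    (emb b * EkMat J) (p, s, !u) (q, u, !u) = b (p, s) (q, u) := by
  rw [mulEk_apply]
  cases u <;> simp [emb]

/-- For every `a ∈ End(V^{⊗(k+1)})` there is a unique `b ∈ End(V^{⊗k})` with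
`a·e_k = (b ⊗ 1)·e_k`; in particular `b ↦ (b ⊗ 1)·e_k` is injective. -/
theorem stmt19 (J : Type*) [Fintype J] [DecidableEq J] :
    (∀ a : Matrix (J × Bool × Bool) (J × Bool × Bool) ℂ,
      ∃! b : Matrix (J × Bool) (J × Bool) ℂ, a * EkMat J = emb b * EkMat J) ∧
    Function.Injective
      (fun b : Matrix (J × Bool) (J × Bool) ℂ => emb b * EkMat J) := by
  have hinj : Function.Injective
      (fun b : Matrix (J × Bool) (J × Bool) ℂ => emb b * EkMat J) := by
    intro b b' h
    ext ⟨p, s⟩ ⟨q, u⟩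
    rw [← embEk_recover b p s q u, ← embEk_recover b' p s q u]
    simp only at h
    rw [h]
  refine ⟨fun a => ?_, hinj⟩
  refine ⟨Matrix.of fun x y => if y.2
      then -(a (x.1, x.2, false) (y.1, false, true) - a (x.1, x.2, false) (y.1, true, false))
      else a (x.1, x.2, true) (y.1, false, true) - a (x.1, x.2, true) (y.1, true, false),
    ?_, fun b' hb' => ?_⟩
  · ext ⟨p, s, t⟩ ⟨q, u, v⟩
    rw [mulEk_apply, mulEk_apply]
    cases t <;> cases u <;> cases v <;> simp [emb] <;> ring
  · apply hinj
    simp only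
    rw [← hb']
    ext ⟨p, s, t⟩ ⟨q, u, v⟩
    rw [mulEk_apply, mulEk_apply]
    cases t <;> cases u <;> cases v <;> simp [emb] <;> ring
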